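/- Let G be a finite simple graph. Then one can assign to each edge e = {u,v} of G a set c(e) of exactly two colors with c(e) ⊆ {1, 2, …, max(deg(u), deg(v)) + 1}, where deg denotes the degree in G, such that for every color i, the spanning subgraph of G whose edge set is {e : i ∈ c(e)} is acyclic (a forest). -/

import Mathlib

/-!
Call a colour `i` missing at an edge `f` if `i ∈ L f \ c f`. A partial colouring (at most two
colours from its list on each edge, every colour class a forest) is enlarged by the augmenting
chains of matroid union. An exchange `f →ᵢ g` means that `i` is missing at `f` and that `g` lies
on the path of colour `i` between the ends of `f`. Take a shortest chain of exchanges from a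
deficient edge `e₀` to an edge `g` with a missing colour `j` whose class does not join the ends
of `g`. Trading for `j` the colour `b` by which the chain enters `g` keeps every class a forest
and leaves a strictly shorter such chain; by induction, `e₀` finally gains a colour.

If there is no such chain, let `S` be the set of edges reached from `e₀`. In every colour `j`
the edges of `S` coloured `j` join the ends of each `f ∈ S` with `j ∈ L f`, so there are at least
`rank {f ∈ S | j ∈ L f}` of them. Their total number is `∑_{f ∈ S} |c f| < 2 |S|`, which
contradicts the rank condition `2 |S| ≤ ∑ⱼ rank {f ∈ S | j ∈ L f}`.

For the lists `{1, …, max (deg u) (deg v) + 1}` the rank condition is counted vertex by vertex: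
a graph has at least `∑_v (1 - 1 / |component of v|)` edges, and for each of the `deg_S v + 1`
colours `j ≤ deg_S v + 1` the component of `v` contains `v` and its `deg_S v` neighbours in `S`,
so `v` contributes at least `deg_S v`; and `∑_v deg_S v = 2 |S|`.
-/

/-- The spanning subgraph of `G` consisting of the edges of `G` satisfying the
predicate `P`. -/
def edgePredSubgraph {V : Type*} (G : SimpleGraph V) (P : Sym2 V → Prop) :
    SimpleGraph V where
  Adj u v := G.Adj u v ∧ P s(u, v)
  symm := ⟨fun u v ⟨h1, h2⟩ => ⟨h1.symm, by rwa [Sym2.eq_swap]⟩⟩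
  loopless := ⟨fun v h => G.loopless.irrefl v h.1⟩

open Finset

namespace SimpleGraph

variable {V : Type*}

theorem reachable_sup_edge {H : SimpleGraph V} {u v a b : V}
    (h : (H ⊔ edge u v).Reachable a b) :
    H.Reachable a b ∨ (H.Reachable a u ∧ H.Reachable v b) ∨
      (H.Reachable a v ∧ H.Reachable u b) := by
  obtain ⟨p⟩ := h
  induction p with
  | nil => exact Or.inl .rfl
  | cons hax _ ih =>
    rcases (sup_adj _ _ _ _).1 hax with hax | hax
    · have hr := hax.reachable
      rcases ih with h | ⟨h₁, h₂⟩ | ⟨h₁, h₂⟩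
      · exact Or.inl (hr.trans h)
      · exact Or.inr (Or.inl ⟨hr.trans h₁, h₂⟩)
      · exact Or.inr (Or.inr ⟨hr.trans h₁, h₂⟩)
    · obtain ⟨⟨rfl, rfl⟩ | ⟨rfl, rfl⟩, -⟩ := (edge_adj ..).1 hax
      · rcases ih with h | ⟨-, h⟩ | ⟨-, h⟩
        · exact Or.inr (Or.inl ⟨.rfl, h⟩)
        · exact Or.inr (Or.inl ⟨.rfl, h⟩)
        · exact Or.inl h
      · rcases ih with h | ⟨-, h⟩ | ⟨-, h⟩
        · exact Or.inr (Or.inr ⟨.rfl, h⟩)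
        · exact Or.inl h
        · exact Or.inr (Or.inr ⟨.rfl, h⟩)

theorem not_reachable_sup_edge {H H' : SimpleGraph V} {u v x y : V} (hle : H' ≤ H)
    (huv : H.Reachable u v) (hxy : ¬H.Reachable x y) (h : ¬H'.Reachable u v) :
    ¬(H' ⊔ edge x y).Reachable u v := by
  intro h'
  rcases reachable_sup_edge h' with h' | ⟨hux, hyv⟩ | ⟨huy, hxv⟩
  · exact h h'
  · exact hxy ((hux.mono hle).symm.trans (huv.trans (hyv.mono hle).symm))
  · exact hxy ((hxv.mono hle).trans (huv.symm.trans (huy.mono hle)))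

theorem card_connectedComponent_le_card_sup_edge_add_one [Finite V] (H : SimpleGraph V)
    (u v : V) :
    Nat.card H.ConnectedComponent ≤ Nat.card (H ⊔ edge u v).ConnectedComponent + 1 := by
  classical
  let φ := ConnectedComponent.map (Hom.ofLE (le_sup_left : H ≤ H ⊔ edge u v))
  -- a merger in `H ⊔ edge u v` always involves the component of `v`
  have hinj : Function.Injective fun C ↦
      if C = H.connectedComponentMk v then none else some (φ C) := by
    intro C₁ C₂ h
    induction C₁ using ConnectedComponent.ind with | h a =>
    induction C₂ using ConnectedComponent.ind with | h b =>
    by_cases ha : H.connectedComponentMk a = H.connectedComponentMk v <;>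
      by_cases hb : H.connectedComponentMk b = H.connectedComponentMk v <;>
      simp only [ha, hb, if_true, if_false, reduceCtorEq, Option.some.injEq, φ,
        ConnectedComponent.map_mk, ConnectedComponent.eq] at h ⊢
    rw [ConnectedComponent.eq] at ha hb
    rcases reachable_sup_edge h with h | ⟨-, h⟩ | ⟨h, -⟩
    · exact h
    · exact absurd h.symm hb
    · exact absurd h ha
  simpa using Nat.card_le_card_of_injective _ hinj

theorem card_le_card_add_card_connectedComponent_fromEdgeSet [Fintype V]
    (B : Finset (Sym2 V)) :
    Fintype.card V ≤ #B + Nat.card (fromEdgeSet (B : Set (Sym2 V))).ConnectedComponent := by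
  classical
  induction B using Finset.induction_on with
  | empty =>
    have : Function.Injective (⊥ : SimpleGraph V).connectedComponentMk := fun a b h ↦
      reachable_bot.1 (ConnectedComponent.eq.1 h)
    simpa [Nat.card_eq_fintype_card] using Nat.card_le_card_of_injective _ this
  | insert e B _ ih =>
    induction e with | h u v =>
    have hins : fromEdgeSet ↑(insert s(u, v) B) = fromEdgeSet ↑B ⊔ edge u v := by
      ext a b
      simp [edge_adj]
      tauto
    have := (fromEdgeSet (B : Set (Sym2 V))).card_connectedComponent_le_card_sup_edge_add_one u v
    have := card_insert_le s(u, v) B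
    grind

theorem card_le_card_edgeFinset_add_card_connectedComponent [Fintype V] [DecidableEq V]
    (H : SimpleGraph V) [DecidableRel H.Adj] :
    Fintype.card V ≤ #H.edgeFinset + Nat.card H.ConnectedComponent := by
  simpa using card_le_card_add_card_connectedComponent_fromEdgeSet H.edgeFinset

theorem sum_inv_card_supp_connectedComponentMk [Fintype V] (H : SimpleGraph V) :
    ∑ v, (Nat.card (H.connectedComponentMk v).supp : ℚ)⁻¹ = Nat.card H.ConnectedComponent := by
  classical
  rw [← Finset.sum_fiberwise univ H.connectedComponentMk, Nat.card_eq_fintype_card,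
    ← card_univ, card_eq_sum_ones, Nat.cast_sum]
  refine sum_congr rfl fun C _ ↦ ?_
  have hC : #{v | H.connectedComponentMk v = C} = Nat.card C.supp := by
    rw [← Set.ncard_coe_finset, ← Nat.card_coe_set_eq]
    congr
    ext
    simp
  rw [sum_congr rfl fun v hv ↦ by rw [(mem_filter.1 hv).2], sum_const, nsmul_eq_mul, hC]
  have : Nat.card C.supp ≠ 0 := by
    induction C using ConnectedComponent.ind with | h v =>
    exact (Nat.card_pos_iff.2 ⟨⟨v, rfl⟩, inferInstance⟩).ne'
  exact mul_inv_cancel₀ (Nat.cast_ne_zero.2 this)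

theorem sum_one_sub_inv_card_supp_le_card_edgeFinset [Fintype V] [DecidableEq V]
    (H : SimpleGraph V) [DecidableRel H.Adj] :
    ∑ v, (1 - (Nat.card (H.connectedComponentMk v).supp : ℚ)⁻¹) ≤ #H.edgeFinset := by
  rw [sum_sub_distrib, sum_inv_card_supp_connectedComponentMk, sum_const, card_univ,
    nsmul_one, sub_le_iff_le_add]
  exact_mod_cast H.card_le_card_edgeFinset_add_card_connectedComponent

theorem degree_add_one_le_card_supp [Fintype V] [DecidableEq V] (S T : SimpleGraph V)
    [DecidableRel S.Adj] {v : V} (h : ∀ w, S.Adj v w → T.Reachable v w) :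
    S.degree v + 1 ≤ Nat.card (T.connectedComponentMk v).supp := by
  have : (↑(insert v (S.neighborFinset v)) : Set V) ⊆ (T.connectedComponentMk v).supp := by
    intro w hw
    rcases mem_insert.1 hw with rfl | hw
    · rfl
    · exact ConnectedComponent.eq.2 (h w ((S.mem_neighborFinset v w).1 hw)).symm
  rw [Nat.card_coe_set_eq]
  refine le_trans ?_ (Set.ncard_le_ncard this)
  rw [Set.ncard_coe_finset, card_insert_of_notMem (S.notMem_neighborFinset_self v),
    card_neighborFinset_eq_degree]

theorem two_mul_card_edgeFinset_le_sum_card_edgeFinset [Fintype V] [DecidableEq V]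
    (S : SimpleGraph V) [DecidableRel S.Adj] (T : ℕ → SimpleGraph V)
    [∀ j, DecidableRel (T j).Adj] (M : ℕ) (hM : ∀ v, S.degree v < M)
    (hT : ∀ v w j, S.Adj v w → 1 ≤ j → j ≤ S.degree v + 1 → (T j).Reachable v w) :
    2 * #S.edgeFinset ≤ ∑ j ∈ Icc 1 M, #(T j).edgeFinset := by
  have hvertex : ∀ v, (S.degree v : ℚ) ≤
      ∑ j ∈ Icc 1 M, (1 - (Nat.card ((T j).connectedComponentMk v).supp : ℚ)⁻¹) := by
    intro v
    calc (S.degree v : ℚ)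
        = ∑ j ∈ Icc 1 (S.degree v + 1), (1 - ((S.degree v + 1 : ℕ) : ℚ)⁻¹) := by
          rw [sum_const, Nat.card_Icc, nsmul_eq_mul]
          push_cast
          field_simp
          ring
      _ ≤ ∑ j ∈ Icc 1 (S.degree v + 1),
            (1 - (Nat.card ((T j).connectedComponentMk v).supp : ℚ)⁻¹) := by
          refine sum_le_sum fun j hj ↦ sub_le_sub_left ?_ _
          obtain ⟨hj₁, hj₂⟩ := mem_Icc.1 hj
          exact inv_anti₀ (by positivity) <| by
            exact_mod_cast degree_add_one_le_card_supp S (T j) fun w hw ↦ hT v w j hw hj₁ hj₂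
      _ ≤ _ := sum_le_sum_of_subset_of_nonneg (Icc_subset_Icc le_rfl (hM v))
          fun j _ _ ↦ sub_nonneg.2 (Nat.cast_inv_le_one _)
  have : (2 * #S.edgeFinset : ℚ) ≤ ∑ j ∈ Icc 1 M, (#(T j).edgeFinset : ℚ) := by
    calc (2 * #S.edgeFinset : ℚ) = ∑ v, (S.degree v : ℚ) := by
          exact_mod_cast (S.sum_degrees_eq_twice_card_edges).symm
      _ ≤ ∑ v, ∑ j ∈ Icc 1 M, (1 - (Nat.card ((T j).connectedComponentMk v).supp : ℚ)⁻¹) :=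
          sum_le_sum fun v _ ↦ hvertex v
      _ = ∑ j ∈ Icc 1 M, ∑ v, (1 - (Nat.card ((T j).connectedComponentMk v).supp : ℚ)⁻¹) :=
          sum_comm
      _ ≤ _ := sum_le_sum fun j _ ↦ (T j).sum_one_sub_inv_card_supp_le_card_edgeFinset
  exact_mod_cast this

theorem IsAcyclic.reachable_of_forall_separating_mem {H K : SimpleGraph V} (hH : H.IsAcyclic)
    {u v : V} (huv : H.Reachable u v)
    (hK : ∀ e, ¬(H.deleteEdges {e}).Reachable u v → e ∈ K.edgeSet) : K.Reachable u v := by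
  classical
  obtain ⟨p, hp⟩ := huv.exists_isPath
  refine ⟨p.transfer K fun e he ↦ hK e fun ⟨q⟩ ↦ ?_⟩
  have hsub : ∀ e ∈ q.bypass.edges, e ∈ H.edgeSet := fun e he ↦
    edgeSet_mono (deleteEdges_le _) (q.bypass.edges_subset_edgeSet he)
  have hpq : p = q.bypass.transfer H hsub := congrArg Subtype.val <|
    (hH.subsingleton_path u v).elim ⟨p, hp⟩ ⟨_, q.bypass_isPath.transfer hsub⟩
  rw [hpq, Walk.edges_transfer] at he
  simpa using q.bypass.edges_subset_edgeSet he

def Joins (H : SimpleGraph V) : Sym2 V → Prop :=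
  Sym2.lift ⟨H.Reachable, fun _ _ ↦ propext reachable_comm⟩

theorem Joins.mono {H H' : SimpleGraph V} (hle : H ≤ H') {e : Sym2 V} (h : H.Joins e) :
    H'.Joins e := by
  induction e with | h u v => exact Reachable.mono hle h

theorem mem_edgeSet_of_joins_of_not_joins_deleteEdges {H : SimpleGraph V} {e g : Sym2 V}
    (he : H.Joins e) (hg : ¬(H.deleteEdges {g}).Joins e) : g ∈ H.edgeSet := by
  by_contra hgH
  rw [(deleteEdges_eq_self).2 (Set.disjoint_singleton_right.2 hgH)] at hg
  exact hg he

end SimpleGraph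

open SimpleGraph

section ListColoring

variable {V κ : Type*}

@[simp] theorem edgePredSubgraph_adj {G : SimpleGraph V} {P : Sym2 V → Prop} {u v : V} :
    (edgePredSubgraph G P).Adj u v ↔ G.Adj u v ∧ P s(u, v) :=
  Iff.rfl

@[simp] theorem mem_edgeSet_edgePredSubgraph {G : SimpleGraph V} {P : Sym2 V → Prop}
    {e : Sym2 V} : e ∈ (edgePredSubgraph G P).edgeSet ↔ e ∈ G.edgeSet ∧ P e := by
  induction e with | h u v => rfl

theorem edgePredSubgraph_le (G : SimpleGraph V) (P : Sym2 V → Prop) :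
    edgePredSubgraph G P ≤ G :=
  fun _ _ h ↦ h.1

section PartialColoring

variable (G : SimpleGraph V) (L : Sym2 V → Finset κ)

def colorClass (c : Sym2 V → Finset κ) (i : κ) : SimpleGraph V :=
  edgePredSubgraph G (i ∈ c ·)

structure IsPartialColoring (c : Sym2 V → Finset κ) : Prop where
  subset : ∀ e ∈ G.edgeSet, c e ⊆ L e
  card_le_two : ∀ e ∈ G.edgeSet, #(c e) ≤ 2
  isAcyclic : ∀ i, (colorClass G c i).IsAcyclic

/-- In a forest, deleting `g` disconnects the ends of `f` exactly when `g` lies on the path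
joining them, i.e. on the cycle that `f` would close. -/
def IsExchange (c : Sym2 V → Finset κ) (f : Sym2 V) (i : κ) (g : Sym2 V) : Prop :=
  i ∈ L f ∧ i ∉ c f ∧ (colorClass G c i).Joins f ∧ ¬((colorClass G c i).deleteEdges {g}).Joins f

def IsFree (c : Sym2 V → Finset κ) (f : Sym2 V) (j : κ) : Prop :=
  j ∈ L f ∧ j ∉ c f ∧ ¬(colorClass G c j).Joins f

inductive ExchangeChain (c : Sym2 V → Finset κ) (e₀ : Sym2 V) : ℕ → Sym2 V → Prop
  | refl : ExchangeChain c e₀ 0 e₀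
  | tail {n : ℕ} {f g : Sym2 V} {i : κ} :
      ExchangeChain c e₀ n f → IsExchange G L c f i g → ExchangeChain c e₀ (n + 1) g

def HasAugmentingChain (c : Sym2 V → Finset κ) (e₀ : Sym2 V) (n : ℕ) : Prop :=
  ∃ f j, ExchangeChain G L c e₀ n f ∧ IsFree G L c f j

variable {G L}

theorem IsExchange.mem_colorClass {c : Sym2 V → Finset κ} {f g : Sym2 V} {i : κ}
    (h : IsExchange G L c f i g) : g ∈ G.edgeSet ∧ i ∈ c g := by
  simpa [colorClass] using mem_edgeSet_of_joins_of_not_joins_deleteEdges h.2.2.1 h.2.2.2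

theorem IsPartialColoring.joins_of_forall_not_hasAugmentingChain {c : Sym2 V → Finset κ}
    (hc : IsPartialColoring G L c) {e₀ : Sym2 V} (hno : ∀ N, ¬HasAugmentingChain G L c e₀ N)
    {f : Sym2 V} (hf : f ∈ G.edgeSet) {n : ℕ} (hchain : ExchangeChain G L c e₀ n f) {j : κ}
    (hjL : j ∈ L f) :
    (edgePredSubgraph (edgePredSubgraph G fun h ↦ ∃ n, ExchangeChain G L c e₀ n h)
      (j ∈ c ·)).Joins f := by
  induction f with | h u v =>
  by_cases hjf : j ∈ c s(u, v)
  · exact Adj.reachable ⟨⟨hf, n, hchain⟩, hjf⟩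
  have hjoin : (colorClass G c j).Joins s(u, v) := by
    by_contra h
    exact hno n ⟨_, j, hchain, hjL, hjf, h⟩
  refine (hc.isAcyclic j).reachable_of_forall_separating_mem hjoin fun h hsep ↦ ?_
  have hex : IsExchange G L c s(u, v) j h := ⟨hjL, hjf, hjoin, hsep⟩
  obtain ⟨hhG, hjh⟩ := hex.mem_colorClass
  exact mem_edgeSet_edgePredSubgraph.2
    ⟨mem_edgeSet_edgePredSubgraph.2 ⟨hhG, n + 1, hchain.tail hex⟩, hjh⟩

variable [DecidableEq V]

theorem colorClass_update_of_notMem {c : Sym2 V → Finset κ} {g : Sym2 V} {X : Finset κ}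
    {i : κ} (hi : i ∉ X) :
    colorClass G (Function.update c g X) i = (colorClass G c i).deleteEdges {g} := by
  ext u v
  by_cases h : s(u, v) = g
  · subst h
    simp [colorClass, hi]
  · simp [colorClass, h]

theorem colorClass_update_of_mem {c : Sym2 V → Finset κ} {g : Sym2 V} (hg : g ∈ G.edgeSet)
    {X : Finset κ} {i : κ} (hi : i ∈ X) :
    colorClass G (Function.update c g X) i = colorClass G c i ⊔ fromEdgeSet {g} := by
  ext u v
  by_cases h : s(u, v) = g
  · subst h
    rw [mem_edgeSet] at hg
    simp [colorClass, hi, hg, G.ne_of_adj hg]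
  · simp [colorClass, h]

theorem colorClass_update_of_mem_iff {c : Sym2 V → Finset κ} {g : Sym2 V} {X : Finset κ}
    {i : κ} (hi : i ∈ X ↔ i ∈ c g) :
    colorClass G (Function.update c g X) i = colorClass G c i := by
  ext u v
  by_cases h : s(u, v) = g
  · subst h
    simp [colorClass, hi]
  · simp [colorClass, h]

theorem IsPartialColoring.update {c : Sym2 V → Finset κ} (hc : IsPartialColoring G L c)
    {g : Sym2 V} (hg : g ∈ G.edgeSet) {X : Finset κ} (hXL : X ⊆ L g) (hX : #X ≤ 2)
    (hnew : ∀ i ∈ X, i ∉ c g → ¬(colorClass G c i).Joins g) :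
    IsPartialColoring G L (Function.update c g X) where
  subset e he := by
    obtain rfl | h := eq_or_ne e g
    · simpa using hXL
    · simpa [Function.update_of_ne h] using hc.subset e he
  card_le_two e he := by
    obtain rfl | h := eq_or_ne e g
    · simpa using hX
    · simpa [Function.update_of_ne h] using hc.card_le_two e he
  isAcyclic i := by
    by_cases hi : i ∈ X
    · by_cases hig : i ∈ c g
      · rw [colorClass_update_of_mem_iff (iff_of_true hi hig)]
        exact hc.isAcyclic i
      · rw [colorClass_update_of_mem hg hi]
        have := hnew i hi hig
        induction g with | h x y =>
        exact (hc.isAcyclic i).sup_edge_of_not_reachable this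
    · rw [colorClass_update_of_notMem hi]
      exact (hc.isAcyclic i).anti (deleteEdges_le _)

variable [DecidableEq κ]

theorem IsPartialColoring.update_insert_of_isFree {c : Sym2 V → Finset κ}
    (hc : IsPartialColoring G L c) {e₀ : Sym2 V} (he₀ : e₀ ∈ G.edgeSet) (h₁ : #(c e₀) ≤ 1)
    {j : κ} (hj : IsFree G L c e₀ j) :
    IsPartialColoring G L (Function.update c e₀ (insert j (c e₀))) := by
  refine hc.update he₀ (insert_subset hj.1 (hc.subset e₀ he₀)) ?_ fun i hi hic ↦ ?_
  · rw [card_insert_of_notMem hj.2.1]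
    omega
  · obtain rfl | hi := mem_insert.1 hi
    · exact hj.2.2
    · exact absurd hi hic

def replaceColor (c : Sym2 V → Finset κ) (g : Sym2 V) (b j : κ) : Sym2 V → Finset κ :=
  Function.update c g (insert j ((c g).erase b))

section replaceColor

variable {c : Sym2 V → Finset κ} {g : Sym2 V} {b j : κ}

theorem replaceColor_of_ne {f : Sym2 V} (hf : f ≠ g) : replaceColor c g b j f = c f :=
  Function.update_of_ne hf _ _

theorem card_replaceColor (hb : b ∈ c g) (hj : j ∉ c g) (e : Sym2 V) :
    #(replaceColor c g b j e) = #(c e) := by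
  obtain rfl | he := eq_or_ne e g
  · rw [replaceColor, Function.update_self,
      card_insert_of_notMem fun h ↦ hj (mem_of_mem_erase h), card_erase_add_one hb]
  · rw [replaceColor_of_ne he]

theorem colorClass_replaceColor_left (hbj : b ≠ j) :
    colorClass G (replaceColor c g b j) b = (colorClass G c b).deleteEdges {g} :=
  colorClass_update_of_notMem (by simp [hbj])

theorem colorClass_replaceColor_right (hg : g ∈ G.edgeSet) :
    colorClass G (replaceColor c g b j) j = colorClass G c j ⊔ fromEdgeSet {g} :=
  colorClass_update_of_mem hg (mem_insert_self _ _)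

theorem colorClass_replaceColor_of_ne {i : κ} (hib : i ≠ b) (hij : i ≠ j) :
    colorClass G (replaceColor c g b j) i = colorClass G c i :=
  colorClass_update_of_mem_iff (by simp [hij, hib])

theorem IsPartialColoring.replaceColor_of_isFree (hc : IsPartialColoring G L c)
    (hg : g ∈ G.edgeSet) (hb : b ∈ c g) (hj : IsFree G L c g j) :
    IsPartialColoring G L (replaceColor c g b j) := by
  refine hc.update hg (insert_subset hj.1 ((erase_subset _ _).trans (hc.subset g hg))) ?_ ?_
  · rw [card_insert_of_notMem fun h ↦ hj.2.1 (mem_of_mem_erase h), card_erase_add_one hb]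
    exact hc.card_le_two g hg
  · intro i hi hig
    obtain rfl | hi := mem_insert.1 hi
    · exact hj.2.2
    · exact absurd (mem_of_mem_erase hi) hig

theorem IsExchange.isExchange_or_isFree_replaceColor (hg : g ∈ G.edgeSet) (hb : b ∈ c g)
    (hj : IsFree G L c g j) {f h : Sym2 V} {i : κ} (hfg : f ≠ g)
    (hex : IsExchange G L c f i h) :
    IsExchange G L (replaceColor c g b j) f i h ∨ IsFree G L (replaceColor c g b j) f i := by
  have hbj : b ≠ j := fun h ↦ hj.2.1 (h ▸ hb)
  simp only [IsExchange, IsFree, replaceColor_of_ne hfg]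
  obtain ⟨hiL, hic, hjoin, hsep⟩ := hex
  by_cases hib : i = b
  · subst hib
    rw [colorClass_replaceColor_left hbj]
    by_cases hjoin' : ((colorClass G c i).deleteEdges {g}).Joins f
    · exact Or.inl ⟨hiL, hic, hjoin', fun h' ↦ hsep (h'.mono (deleteEdges_mono (deleteEdges_le _)))⟩
    · exact Or.inr ⟨hiL, hic, hjoin'⟩
  by_cases hij : i = j
  · subst hij
    rw [colorClass_replaceColor_right hg]
    refine Or.inl ⟨hiL, hic, hjoin.mono le_sup_left, ?_⟩
    induction f with | h u v =>
    induction g with | h x y =>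
    have hle : (colorClass G c i ⊔ edge x y).deleteEdges {h} ≤
        (colorClass G c i).deleteEdges {h} ⊔ edge x y := by
      rw [deleteEdges_sup]
      exact sup_le_sup_left (deleteEdges_le _) _
    exact fun hr ↦ not_reachable_sup_edge (deleteEdges_le _) hjoin hj.2.2 hsep (hr.mono hle)
  · rw [colorClass_replaceColor_of_ne hib hij]
    exact Or.inl ⟨hiL, hic, hjoin, hsep⟩

theorem IsExchange.isFree_replaceColor (hj : j ∉ c g) {f : Sym2 V} (hfg : f ≠ g)
    (hex : IsExchange G L c f b g) : IsFree G L (replaceColor c g b j) f b := by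
  have hbj : b ≠ j := fun h ↦ hj (h ▸ hex.mem_colorClass.2)
  refine ⟨hex.1, by rw [replaceColor_of_ne hfg]; exact hex.2.1, ?_⟩
  rw [colorClass_replaceColor_left hbj]
  exact hex.2.2.2

theorem ExchangeChain.exchangeChain_or_hasAugmentingChain_replaceColor {e₀ : Sym2 V}
    (hg : g ∈ G.edgeSet) (hb : b ∈ c g) (hj : IsFree G L c g j) {N : ℕ}
    (hne : ∀ m < N, ∀ f, ExchangeChain G L c e₀ m f → f ≠ g) {n : ℕ} {f : Sym2 V}
    (h : ExchangeChain G L c e₀ n f) (hn : n < N) :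
    ExchangeChain G L (replaceColor c g b j) e₀ n f ∨
      ∃ m < N, HasAugmentingChain G L (replaceColor c g b j) e₀ m := by
  induction h with
  | refl => exact Or.inl .refl
  | @tail n f h i hchain hex ih =>
    rcases ih (by omega) with ih | ih
    · rcases hex.isExchange_or_isFree_replaceColor hg hb hj (hne n (by omega) f hchain) with
        hex' | hfree
      · exact Or.inl (ih.tail hex')
      · exact Or.inr ⟨n, by omega, f, i, ih, hfree⟩
    · exact Or.inr ih

end replaceColor

theorem IsPartialColoring.exists_card_succ_of_hasAugmentingChain {c : Sym2 V → Finset κ}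
    (hc : IsPartialColoring G L c) {e₀ : Sym2 V} (he₀ : e₀ ∈ G.edgeSet) (h₁ : #(c e₀) ≤ 1)
    {N : ℕ} (hN : HasAugmentingChain G L c e₀ N) :
    ∃ c', IsPartialColoring G L c' ∧ #(c' e₀) = #(c e₀) + 1 ∧ ∀ e ≠ e₀, #(c' e) = #(c e) := by
  induction N using Nat.strong_induction_on generalizing c with | _ N ih =>
  by_cases hshort : ∃ m < N, HasAugmentingChain G L c e₀ m
  · obtain ⟨m, hm, hm'⟩ := hshort
    exact ih m hm hc h₁ hm'
  push Not at hshort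
  obtain ⟨g, j, hchain, hj⟩ := hN
  cases hchain with
  | refl =>
    refine ⟨_, hc.update_insert_of_isFree he₀ h₁ hj, ?_, fun e he ↦ ?_⟩
    · rw [Function.update_self, card_insert_of_notMem hj.2.1]
    · rw [Function.update_of_ne he]
  | @tail n f _ b hchain hex =>
    -- on a shortest augmenting chain the last edge `g` occurs nowhere earlier
    have hne : ∀ m < n + 1, ∀ f, ExchangeChain G L c e₀ m f → f ≠ g :=
      fun m hm f hf hfg ↦ hshort m hm ⟨f, j, hf, hfg ▸ hj⟩
    obtain ⟨hg, hb⟩ := hex.mem_colorClass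
    have hcard := card_replaceColor (b := b) hb hj.2.1
    obtain ⟨m, hm, hm'⟩ : ∃ m < n + 1, HasAugmentingChain G L (replaceColor c g b j) e₀ m := by
      rcases hchain.exchangeChain_or_hasAugmentingChain_replaceColor hg hb hj hne
        (Nat.lt_succ_self n) with h | h
      · exact ⟨n, Nat.lt_succ_self n, f, b, h,
          hex.isFree_replaceColor hj.2.1 (hne n (Nat.lt_succ_self n) f hchain)⟩
      · exact h
    obtain ⟨c', hc', h₁', h₂'⟩ := ih m hm (hc.replaceColor_of_isFree hg hb hj) (by rwa [hcard]) hm'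
    exact ⟨c', hc', by rw [h₁', hcard], fun e he ↦ by rw [h₂' e he, hcard]⟩

variable [Fintype V]

variable (G L) in
open Classical in
/-- As `T j` ranges over the graphs joining the ends of all `f ∈ S` with `j ∈ L f`, the least
value of `#(T j).edgeFinset` is the cycle-matroid rank of `{f ∈ S | j ∈ L f}`; this is the
condition `2 |S| ≤ ∑ⱼ r {f ∈ S | j ∈ L f}` of the matroid list-colouring theorem. -/
def ListRankCondition (K : Finset κ) : Prop :=
  ∀ S ≤ G, ∀ T : κ → SimpleGraph V, (∀ f ∈ S.edgeSet, ∀ j ∈ L f, (T j).Joins f) →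
    2 * #S.edgeFinset ≤ ∑ j ∈ K, #(T j).edgeFinset

theorem IsPartialColoring.exists_hasAugmentingChain {K : Finset κ}
    (hL : ListRankCondition G L K) {c : Sym2 V → Finset κ} (hc : IsPartialColoring G L c)
    {e₀ : Sym2 V} (he₀ : e₀ ∈ G.edgeSet) (h₁ : #(c e₀) ≤ 1) :
    ∃ N, HasAugmentingChain G L c e₀ N := by
  classical
  by_contra hno
  push Not at hno
  set S := edgePredSubgraph G fun f ↦ ∃ n, ExchangeChain G L c e₀ n f
  set T : κ → SimpleGraph V := fun j ↦ edgePredSubgraph S (j ∈ c ·)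
  have hcount := hL S (edgePredSubgraph_le _ _) T fun f hf j hjL ↦ by
    obtain ⟨hfG, n, hchain⟩ := mem_edgeSet_edgePredSubgraph.1 hf
    exact hc.joins_of_forall_not_hasAugmentingChain hno hfG hchain hjL
  have hsum : ∑ j ∈ K, #(T j).edgeFinset ≤ ∑ f ∈ S.edgeFinset, #(c f) := by
    calc ∑ j ∈ K, #(T j).edgeFinset = ∑ j ∈ K, #{f ∈ S.edgeFinset | j ∈ c f} := by
          congr! 2 with j
          ext f
          simp [T]
      _ = ∑ f ∈ S.edgeFinset, #{j ∈ K | j ∈ c f} :=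
          sum_card_bipartiteAbove_eq_sum_card_bipartiteBelow _
      _ ≤ _ := sum_le_sum fun f _ ↦ card_le_card fun j hj ↦ (mem_filter.1 hj).2
  have he₀S : e₀ ∈ S.edgeFinset := by simpa [S] using ⟨he₀, 0, ExchangeChain.refl⟩
  have hrest : ∑ f ∈ S.edgeFinset.erase e₀, #(c f) ≤ #(S.edgeFinset.erase e₀) * 2 := by
    refine sum_le_card_nsmul _ _ _ fun f hf ↦ hc.card_le_two f ?_
    exact (mem_edgeSet_edgePredSubgraph.1 (mem_edgeFinset.1 (mem_of_mem_erase hf))).1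
  have := add_sum_erase _ (fun f ↦ #(c f)) he₀S
  have := card_erase_add_one he₀S
  omega

theorem exists_isPartialColoring_forall_card_eq_two {K : Finset κ}
    (hL : ListRankCondition G L K) :
    ∃ c, IsPartialColoring G L c ∧ ∀ e ∈ G.edgeSet, #(c e) = 2 := by
  classical
  suffices ∀ n c, IsPartialColoring G L c → ∑ e ∈ G.edgeFinset, (2 - #(c e)) ≤ n →
      ∃ c', IsPartialColoring G L c' ∧ ∀ e ∈ G.edgeSet, #(c' e) = 2 by
    refine this _ (fun _ ↦ ∅) ⟨by simp, by simp, fun i ↦ isAcyclic_bot.anti ?_⟩ le_rfl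
    intro u v h
    simp [colorClass] at h
  intro n
  induction n with
  | zero =>
    intro c hc h
    refine ⟨c, hc, fun e he ↦ ?_⟩
    have := sum_eq_zero_iff.1 (Nat.le_zero.1 h) e (mem_edgeFinset.2 he)
    have := hc.card_le_two e he
    omega
  | succ n ih =>
    intro c hc h
    by_cases hfull : ∀ e ∈ G.edgeSet, #(c e) = 2
    · exact ⟨c, hc, hfull⟩
    push Not at hfull
    obtain ⟨e₀, he₀, hne⟩ := hfull
    have h₁ : #(c e₀) ≤ 1 := by
      have := hc.card_le_two e₀ he₀
      omega
    obtain ⟨N, hN⟩ := hc.exists_hasAugmentingChain hL he₀ h₁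
    obtain ⟨c', hc', hce₀, hce⟩ := hc.exists_card_succ_of_hasAugmentingChain he₀ h₁ hN
    refine ih c' hc' (Nat.le_of_lt_succ (lt_of_lt_of_le ?_ h))
    refine sum_lt_sum (fun e _ ↦ ?_) ⟨e₀, mem_edgeFinset.2 he₀, by omega⟩
    obtain rfl | he := eq_or_ne e e₀
    · omega
    · rw [hce e he]

end PartialColoring

def degreeList [Fintype V] (G : SimpleGraph V) [DecidableRel G.Adj] : Sym2 V → Finset ℕ :=
  Sym2.lift ⟨fun u v ↦ Icc 1 (max (G.degree u) (G.degree v) + 1), fun u v ↦ by simp [max_comm]⟩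

theorem listRankCondition_degreeList [Fintype V] [DecidableEq V] (G : SimpleGraph V)
    [DecidableRel G.Adj] : ListRankCondition G (degreeList G) (Icc 1 (Fintype.card V)) := by
  classical
  intro S hS T hT
  refine two_mul_card_edgeFinset_le_sum_card_edgeFinset S T _ (fun v ↦ S.degree_lt_card_verts v)
    fun v w j hvw hj₁ hj₂ ↦ hT s(v, w) hvw j (mem_Icc.2 ⟨hj₁, hj₂.trans ?_⟩)
  have := degree_le_of_le (v := v) hS
  change S.degree v + 1 ≤ max (G.degree v) (G.degree w) + 1
  omega

end ListColoring

/-- For a finite simple graph `G` one can assign to each edge `{u, v}` a set of exactly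
two colors from `{1, …, max (deg u) (deg v) + 1}` so that, for every color `i`, the
spanning subgraph consisting of the edges carrying color `i` is acyclic. -/
theorem exists_two_coloring_acyclic {V : Type*} [Fintype V] [DecidableEq V]
    (G : SimpleGraph V) [DecidableRel G.Adj] :
    ∃ c : Sym2 V → Finset ℕ,
      (∀ u v, G.Adj u v → (c s(u, v)).card = 2 ∧
        c s(u, v) ⊆ Finset.Icc 1 (max (G.degree u) (G.degree v) + 1)) ∧
      ∀ i : ℕ, (edgePredSubgraph G fun e => i ∈ c e).IsAcyclic := by
  obtain ⟨c, hc, hcard⟩ :=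
    exists_isPartialColoring_forall_card_eq_two (listRankCondition_degreeList G)
  exact ⟨c, fun u v huv ↦ ⟨hcard _ huv, hc.subset _ huv⟩, hc.isAcyclic⟩
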